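/- arXiv:1612.01450 — 3 statements merged into one kernel-verified Lean document; each statement's English description precedes it below -/
import Mathlib

section
/- The discounted, budget-truncated aggregation of level-wise similarities is itself a similarity value: under the stated hypotheses, 0 ≤ Sim ≤ 1. -/
open Finset

/-!
The factor `max (1 - ∑_{l' < l} s l') 0` is the budget left over by the first `l` levels, and
level `l` consumes at least the fraction `s l` of it. Bounding `σ ^ l` by `1`, the sum therefore
telescopes to at most the initial budget `1`.
-/

section

variable {α : Type*} [CommRing α] [LinearOrder α] [IsStrictOrderedRing α]

theorem max_zero_mul_le_max_zero_sub_max_sub_zero {x t : α} (hx : x ≤ 1) (ht₀ : 0 ≤ t)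
    (ht₁ : t ≤ 1) : max x 0 * t ≤ max x 0 - max (x - t) 0 := by
  rcases le_total x 0 with hx₀ | hx₀
  · simp [max_eq_right hx₀, max_eq_right (show x - t ≤ 0 by linarith)]
  rcases le_total (x - t) 0 with hxt | hxt
  · rw [max_eq_left hx₀, max_eq_right hxt]
    nlinarith
  · rw [max_eq_left hx₀, max_eq_left hxt]
    nlinarith

theorem sum_range_max_one_sub_sum_mul_le_one (m : ℕ) {s : ℕ → α}
    (hs : ∀ l < m, 0 ≤ s l ∧ s l ≤ 1) :
    ∑ l ∈ range m, max (1 - ∑ l' ∈ range l, s l') 0 * s l ≤ 1 := by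
  set budget : ℕ → α := fun l => max (1 - ∑ l' ∈ range l, s l') 0
  have hstep : ∀ l ∈ range m, budget l * s l ≤ budget l - budget (l + 1) := by
    intro l hl
    have hlm := mem_range.mp hl
    have hsum : 0 ≤ ∑ l' ∈ range l, s l' :=
      sum_nonneg fun i hi => (hs i ((mem_range.mp hi).trans hlm)).1
    simpa only [budget, sum_range_succ, sub_add_eq_sub_sub] using
      max_zero_mul_le_max_zero_sub_max_sub_zero (by linarith) (hs l hlm).1 (hs l hlm).2
  calc ∑ l ∈ range m, budget l * s l
      ≤ ∑ l ∈ range m, (budget l - budget (l + 1)) := sum_le_sum hstep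
    _ = budget 0 - budget m := sum_range_sub' budget m
    _ ≤ 1 := by simp [budget]

end

theorem overall_similarity_bounds (n : ℕ) (s : ℕ → ℝ) (σ : ℝ)
    (hs : ∀ l ≤ n, 0 ≤ s l ∧ s l ≤ 1) (hσ0 : 0 ≤ σ) (hσ1 : σ ≤ 1)
    (Sim : ℝ)
    (hSim : Sim = ∑ l ∈ range (n + 1),
      max (1 - ∑ l' ∈ range l, s l') 0 * s l * σ ^ l) :
    0 ≤ Sim ∧ Sim ≤ 1 := by
  have hterm : ∀ l ∈ range (n + 1), 0 ≤ max (1 - ∑ l' ∈ range l, s l') 0 * s l :=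
    fun l hl => mul_nonneg (le_max_right _ _) (hs l (mem_range_succ_iff.mp hl)).1
  subst hSim
  constructor
  · exact sum_nonneg fun l hl => mul_nonneg (hterm l hl) (pow_nonneg hσ0 l)
  · calc _ ≤ ∑ l ∈ range (n + 1), max (1 - ∑ l' ∈ range l, s l') 0 * s l :=
          sum_le_sum fun l hl => mul_le_of_le_one_right (hterm l hl) (pow_le_one₀ hσ0 hσ1)
      _ ≤ 1 := sum_range_max_one_sub_sum_mul_le_one (n + 1) fun l hl =>
          hs l (Nat.lt_succ_iff.mp hl)
end

section
/- Theorem 2 (near-optimality of the greedy algorithm). Let f : Finset S → ℝ be submodular, monotone and normalized on a finite set S, let ρ be a budget with 1 ≤ ρ ≤ |S|, and let A_0, A_1, …, A_ρ be a greedy sequence for f. Then f(A_ρ) ≥ (1 − 1/e) · f(A') for every A' ⊆ S with |A'| = ρ; that is, f(A_ρ) ≥ (1 − 1/e) · max_{A' ⊆ S, |A'| = ρ} f(A'), where e is Euler's number. -/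
/-!
STATEMENT 13 (Theorem 2, near-optimality of the greedy algorithm).
Let `f` be submodular, monotone and normalized on the subsets of a finite set `S`,
let `ρ` be a budget with `1 ≤ ρ ≤ |S|`, and let `A 0 = ∅, A 1, …, A ρ` be a greedy
sequence for `f`: `A (s+1) = A s ∪ {x s}` where `x s ∈ S \ A s` maximizes the
marginal gain `f (A s ∪ {x}) - f (A s)` over `x ∈ S \ A s`. Then
`f (A ρ) ≥ (1 - 1/e) * f A'` for every `A' ⊆ S` with `|A'| = ρ`.
-/
theorem greedy_near_optimal {α : Type*} [DecidableEq α]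
    (S : Finset α) (f : Finset α → ℝ)
    (hsub : ∀ A B : Finset α, A ⊆ B → B ⊆ S → ∀ x ∈ S, x ∉ B →
      f (A ∪ {x}) - f A ≥ f (B ∪ {x}) - f B)
    (hmono : ∀ A B : Finset α, A ⊆ B → B ⊆ S → f A ≤ f B)
    (hnorm : f ∅ = 0)
    (ρ : ℕ) (hρ1 : 1 ≤ ρ) (hρS : ρ ≤ S.card)
    (A : ℕ → Finset α) (x : ℕ → α)
    (hA0 : A 0 = ∅)
    (hx : ∀ s < ρ, x s ∈ S ∧ x s ∉ A s)
    (hAsucc : ∀ s < ρ, A (s + 1) = A s ∪ {x s})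
    (hgreedy : ∀ s < ρ, ∀ y ∈ S, y ∉ A s →
      f (A s ∪ {y}) ≤ f (A s ∪ {x s})) :
    ∀ A' : Finset α, A' ⊆ S → A'.card = ρ →
      f (A ρ) ≥ (1 - 1 / Real.exp 1) * f A' := by
  intro A' hA'S hA'card
  have hAS : ∀ s, s ≤ ρ → A s ⊆ S := by
    intro s
    induction s with
    | zero => intro _; rw [hA0]; exact Finset.empty_subset S
    | succ n ih =>
      intro h
      rw [hAsucc n (by omega)]
      exact Finset.union_subset (ih (by omega))
        (by simpa using (hx n (by omega)).1)
  have hOPT0 : 0 ≤ f A' := by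
    have h := hmono ∅ A' (Finset.empty_subset _) hA'S
    rw [hnorm] at h; exact h
  -- telescoping inequality
  have tele : ∀ T : Finset α, T ⊆ S → ∀ B : Finset α, B ⊆ S →
      f (B ∪ T) ≤ f B + ∑ y ∈ T, (f (B ∪ {y}) - f B) := by
    intro T
    induction T using Finset.induction_on with
    | empty => intro _ B _; simp
    | @insert y T' hyT' ih =>
      intro hTS B hBS
      have hyS : y ∈ S := hTS (Finset.mem_insert_self _ _)
      have hT'S : T' ⊆ S := (Finset.subset_insert _ _).trans hTS
      rw [Finset.sum_insert hyT']
      have hun : B ∪ insert y T' = (B ∪ T') ∪ {y} := by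
        ext z; simp
      have key : f (B ∪ insert y T') ≤ f (B ∪ T') + (f (B ∪ {y}) - f B) := by
        rw [hun]
        by_cases hy : y ∈ B ∪ T'
        · have he : (B ∪ T') ∪ {y} = B ∪ T' := by
            apply Finset.union_eq_left.2; simpa using hy
          rw [he]
          have h0 : f B ≤ f (B ∪ {y}) :=
            hmono B (B ∪ {y}) Finset.subset_union_left
              (Finset.union_subset hBS (by simpa using hyS))
          linarith
        · have h1 := hsub B (B ∪ T') Finset.subset_union_left
            (Finset.union_subset hBS hT'S) y hyS hy
          linarith
      have h2 := ih hT'S B hBS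
      linarith
  -- main recurrence step
  have step : ∀ s < ρ, f A' ≤ f (A s) + (ρ : ℝ) * (f (A (s+1)) - f (A s)) := by
    intro s hs
    have hAsS : A s ⊆ S := hAS s (le_of_lt hs)
    have hAs1S : A (s+1) ⊆ S := hAS (s+1) hs
    have hAsub : A s ⊆ A (s+1) := by
      rw [hAsucc s hs]; exact Finset.subset_union_left
    have hd0 : 0 ≤ f (A (s+1)) - f (A s) := by
      have := hmono (A s) (A (s+1)) hAsub hAs1S; linarith
    have h1 : f A' ≤ f (A s ∪ A') :=
      hmono A' (A s ∪ A') Finset.subset_union_right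
        (Finset.union_subset hAsS hA'S)
    have h2 := tele A' hA'S (A s) hAsS
    have h3 : ∑ y ∈ A', (f (A s ∪ {y}) - f (A s))
        ≤ A'.card • (f (A (s+1)) - f (A s)) := by
      apply Finset.sum_le_card_nsmul
      intro y hy
      by_cases hyA : y ∈ A s
      · have he : A s ∪ {y} = A s := by
          apply Finset.union_eq_left.2; simpa using hyA
        rw [he]; linarith
      · have h4 := hgreedy s hs y (hA'S hy) hyA
        rw [hAsucc s hs]
        linarith
    rw [hA'card, nsmul_eq_mul] at h3
    linarith
  set r : ℝ := (ρ : ℝ) with hr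
  have hr1 : (1:ℝ) ≤ r := by rw [hr]; exact_mod_cast hρ1
  have hrpos : (0:ℝ) < r := by linarith
  have hc0 : (0:ℝ) ≤ 1 - 1/r := by
    have : 1/r ≤ 1 := by
      rw [div_le_one hrpos]; linarith
    linarith
  have bound : ∀ s, s ≤ ρ → f A' - f (A s) ≤ (1 - 1/r)^s * f A' := by
    intro s
    induction s with
    | zero => intro _; rw [hA0, hnorm]; simp
    | succ n ih =>
      intro h
      have hn : n < ρ := by omega
      have ihn := ih (by omega)
      have hst := step n hn
      have hX : f A' - f (A n) ≤ r * (f (A (n+1)) - f (A n)) := by linarith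
      have h3 : (1/r) * (f A' - f (A n)) ≤ f (A (n+1)) - f (A n) := by
        rw [div_mul_eq_mul_div, div_le_iff₀ hrpos]
        linarith [mul_comm (f (A (n+1)) - f (A n)) r]
      have hrec : f A' - f (A (n+1)) ≤ (1 - 1/r) * (f A' - f (A n)) := by
        nlinarith
      calc f A' - f (A (n+1)) ≤ (1 - 1/r) * (f A' - f (A n)) := hrec
        _ ≤ (1 - 1/r) * ((1 - 1/r)^n * f A') :=
            mul_le_mul_of_nonneg_left ihn hc0
        _ = (1 - 1/r)^(n+1) * f A' := by ring
  have hfinal := bound ρ le_rfl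
  have hexp : (1 - 1/r) ≤ Real.exp (-(1/r)) := by
    have := Real.add_one_le_exp (-(1/r))
    linarith
  have hpow : (1 - 1/r)^ρ ≤ Real.exp (-1) := by
    calc (1 - 1/r)^ρ ≤ (Real.exp (-(1/r)))^ρ := pow_le_pow_left₀ hc0 hexp ρ
      _ = Real.exp ((ρ:ℝ) * (-(1/r))) := (Real.exp_nat_mul _ ρ).symm
      _ = Real.exp (-1) := by
          congr 1
          field_simp
          rw [hr]
  have hmul : (1 - 1/r)^ρ * f A' ≤ Real.exp (-1) * f A' :=
    mul_le_mul_of_nonneg_right hpow hOPT0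
  have hexpneg : Real.exp (-1) = 1 / Real.exp 1 := by
    rw [Real.exp_neg]; ring
  rw [hexpneg] at hmul
  have : f A' - f (A ρ) ≤ (1 / Real.exp 1) * f A' := le_trans hfinal hmul
  linarith [this]
end

section
/- Geometric decrease of the greedy optimality gap. Let f : Finset S → ℝ be submodular, monotone and normalized on a finite set S, let ρ be a budget with 1 ≤ ρ ≤ |S|, and let A_0, A_1, …, A_ρ be a greedy sequence for f. Then for every O ⊆ S with |O| ≤ ρ and every s with 0 ≤ s < ρ: f(O) − f(A_{s+1}) ≤ (1 − 1/ρ) · (f(O) − f(A_s)). -/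
/-!
Write `D = f O - f (A s)` and `g = f (A (s+1)) - f (A s)` for the greedy gain. By monotonicity and
submodularity, `D ≤ f (A s ∪ O) - f (A s)` is at most the sum of the marginal gains of the
elements of `O \ A s` over `A s`; each of them is at most `g` by the greedy choice, so
`D ≤ |O| g ≤ ρ g`, i.e. `f O - f (A (s+1)) = D - g ≤ (1 - 1/ρ) D`.
-/

section Submodular

variable {α : Type*} [DecidableEq α] {S : Finset α} {f : Finset α → ℝ}

theorem sub_le_sum_marginal_of_submodular
    (hsub : ∀ A B : Finset α, A ⊆ B → B ⊆ S → ∀ x ∈ S, x ∉ B →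
      f (A ∪ {x}) - f A ≥ f (B ∪ {x}) - f B)
    {B : Finset α} (hB : B ⊆ S) {T : Finset α} (hT : T ⊆ S) (hTB : Disjoint T B) :
    f (B ∪ T) - f B ≤ ∑ y ∈ T, (f (B ∪ {y}) - f B) := by
  induction T using Finset.induction_on with
  | empty => simp
  | insert a T haT ih =>
    rw [Finset.insert_subset_iff] at hT
    rw [Finset.disjoint_insert_left] at hTB
    have haBT : a ∉ B ∪ T := by simp [hTB.1, haT]
    have hgain := hsub B (B ∪ T) Finset.subset_union_left (Finset.union_subset hB hT.2) a hT.1 haBT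
    rw [Finset.union_insert, Finset.insert_eq, Finset.union_comm {a}, Finset.sum_insert haT]
    linarith [ih hT.2 hTB.2]

theorem sub_le_card_mul_of_marginal_le
    (hsub : ∀ A B : Finset α, A ⊆ B → B ⊆ S → ∀ x ∈ S, x ∉ B →
      f (A ∪ {x}) - f A ≥ f (B ∪ {x}) - f B)
    (hmono : ∀ A B : Finset α, A ⊆ B → B ⊆ S → f A ≤ f B)
    {B O : Finset α} (hB : B ⊆ S) (hO : O ⊆ S) {g : ℝ} (hg : 0 ≤ g)
    (hgain : ∀ y ∈ O \ B, f (B ∪ {y}) - f B ≤ g) :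
    f O - f B ≤ O.card * g := by
  have hOB : O \ B ⊆ S := Finset.sdiff_subset.trans hO
  have hcard : ((O \ B).card : ℝ) ≤ O.card := by
    exact_mod_cast Finset.card_le_card Finset.sdiff_subset
  calc f O - f B ≤ f (B ∪ O \ B) - f B := by
        rw [Finset.union_sdiff_self_eq_union]
        linarith [hmono _ _ Finset.subset_union_right (Finset.union_subset hB hO)]
    _ ≤ ∑ y ∈ O \ B, (f (B ∪ {y}) - f B) :=
        sub_le_sum_marginal_of_submodular hsub hB hOB Finset.sdiff_disjoint
    _ ≤ ∑ _y ∈ O \ B, g := Finset.sum_le_sum hgain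
    _ = (O \ B).card * g := by rw [Finset.sum_const, nsmul_eq_mul]
    _ ≤ O.card * g := by gcongr

end Submodular

theorem greedy_subset {α : Type*} [DecidableEq α] {S : Finset α} {ρ : ℕ}
    {A : ℕ → Finset α} {x : ℕ → α} (hA0 : A 0 = ∅) (hx : ∀ s < ρ, x s ∈ S)
    (hAsucc : ∀ s < ρ, A (s + 1) = A s ∪ {x s}) :
    ∀ s ≤ ρ, A s ⊆ S := by
  intro s
  induction s with
  | zero => simp [hA0]
  | succ s ih =>
    intro hs
    rw [hAsucc s hs]
    exact Finset.union_subset (ih (Nat.le_of_succ_le hs)) (Finset.singleton_subset_iff.2 (hx s hs))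

theorem greedy_gap_geometric_decrease_general {α : Type*} [DecidableEq α]
    (S : Finset α) (f : Finset α → ℝ)
    (hsub : ∀ A B : Finset α, A ⊆ B → B ⊆ S → ∀ x ∈ S, x ∉ B →
      f (A ∪ {x}) - f A ≥ f (B ∪ {x}) - f B)
    (hmono : ∀ A B : Finset α, A ⊆ B → B ⊆ S → f A ≤ f B)
    (ρ : ℕ)
    (A : ℕ → Finset α) (x : ℕ → α)
    (hA0 : A 0 = ∅)
    (hx : ∀ s < ρ, x s ∈ S ∧ x s ∉ A s)
    (hAsucc : ∀ s < ρ, A (s + 1) = A s ∪ {x s})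
    (hgreedy : ∀ s < ρ, ∀ y ∈ S, y ∉ A s →
      f (A s ∪ {y}) ≤ f (A s ∪ {x s})) :
    ∀ O : Finset α, O ⊆ S → O.card ≤ ρ → ∀ s < ρ,
      f O - f (A (s + 1)) ≤ (1 - 1 / (ρ : ℝ)) * (f O - f (A s)) := by
  intro O hO hOρ s hs
  have hAS := greedy_subset hA0 (fun s hs => (hx s hs).1) hAsucc
  have hstep : A s ⊆ A (s + 1) := hAsucc s hs ▸ Finset.subset_union_left
  have hg : 0 ≤ f (A (s + 1)) - f (A s) := sub_nonneg.2 (hmono _ _ hstep (hAS _ hs))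
  have hgain : ∀ y ∈ O \ A s, f (A s ∪ {y}) - f (A s) ≤ f (A (s + 1)) - f (A s) := by
    intro y hy
    rw [Finset.mem_sdiff] at hy
    linarith [hAsucc s hs ▸ hgreedy s hs y (hO hy.1) hy.2]
  have hgap := sub_le_card_mul_of_marginal_le hsub hmono (hAS s hs.le) hO hg hgain
  have hρ : (0 : ℝ) < ρ := Nat.cast_pos.2 (Nat.zero_lt_of_lt hs)
  have hgap' : f O - f (A s) ≤ ρ * (f (A (s + 1)) - f (A s)) :=
    hgap.trans (mul_le_mul_of_nonneg_right (by exact_mod_cast hOρ) hg)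
  have hdiv : (f O - f (A s)) / ρ ≤ f (A (s + 1)) - f (A s) := by
    rwa [div_le_iff₀' hρ]
  calc f O - f (A (s + 1)) ≤ (f O - f (A s)) - (f O - f (A s)) / ρ := by linarith
    _ = (1 - 1 / (ρ : ℝ)) * (f O - f (A s)) := by ring

theorem greedy_gap_geometric_decrease {α : Type*} [DecidableEq α]
    (S : Finset α) (f : Finset α → ℝ)
    (hsub : ∀ A B : Finset α, A ⊆ B → B ⊆ S → ∀ x ∈ S, x ∉ B →
      f (A ∪ {x}) - f A ≥ f (B ∪ {x}) - f B)
    (hmono : ∀ A B : Finset α, A ⊆ B → B ⊆ S → f A ≤ f B)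
    (hnorm : f ∅ = 0)
    (ρ : ℕ) (hρ1 : 1 ≤ ρ) (hρS : ρ ≤ S.card)
    (A : ℕ → Finset α) (x : ℕ → α)
    (hA0 : A 0 = ∅)
    (hx : ∀ s < ρ, x s ∈ S ∧ x s ∉ A s)
    (hAsucc : ∀ s < ρ, A (s + 1) = A s ∪ {x s})
    (hgreedy : ∀ s < ρ, ∀ y ∈ S, y ∉ A s →
      f (A s ∪ {y}) ≤ f (A s ∪ {x s})) :
    ∀ O : Finset α, O ⊆ S → O.card ≤ ρ → ∀ s < ρ,
      f O - f (A (s + 1)) ≤ (1 - 1 / (ρ : ℝ)) * (f O - f (A s)) :=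
  greedy_gap_geometric_decrease_general S f hsub hmono ρ A x hA0 hx hAsucc hgreedy
end
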